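/- Let (P,≻,q) be a problem and k > 1. Every blocking student for the outcome β^k(P,≻,q) of the constrained Boston mechanism under (P,≻,q) is a manipulating student of β^k at (P,≻,q). -/

import Mathlib

/-!
School choice framework following Bonkoungou–Nesterov,
"Reforms meet fairness concerns in school and college admissions".

Students `I` and schools `S` are finite types with `|I| > |S|`.
A strict preference relation of a student over `S ∪ {∅}` is represented by a list
of `Option S` containing every element exactly once (earlier = more preferred);
`none` is the outside option.  A strict priority order of a school is a list of
`I` containing every student exactly once (earlier = higher priority).
-/

namespace SchoolChoice

variable {I S : Type*} [Fintype I] [DecidableEq I] [Fintype S] [DecidableEq S]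

/-- `p` is a strict preference relation on `S ∪ {∅}`: a ranking list containing every
element of `Option S` exactly once. -/
def ValidPref (p : List (Option S)) : Prop := p.Nodup ∧ ∀ x : Option S, x ∈ p

/-- `pr` is a strict priority order: a ranking list containing every student exactly once. -/
def ValidPrio (pr : List I) : Prop := pr.Nodup ∧ ∀ i : I, i ∈ pr

/-- `a` is strictly preferred to `b` under the preference relation `p`. -/
def prefLt (p : List (Option S)) (a b : Option S) : Prop := p.idxOf a < p.idxOf b

/-- `i` has strictly higher priority than `j` under the priority order `pr`. -/
def prioLt (pr : List I) (i j : I) : Prop := pr.idxOf i < pr.idxOf j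

instance (p : List (Option S)) (a b : Option S) : Decidable (prefLt p a b) :=
  inferInstanceAs (Decidable (_ < _))

instance (pr : List I) (i j : I) : Decidable (prioLt pr i j) :=
  inferInstanceAs (Decidable (_ < _))

/-- The acceptable schools of `p` (those preferred to the outside option), in preference
order. -/
def acceptables (p : List (Option S)) : List S := (p.takeWhile Option.isSome).filterMap id

/-- The truncation of `p` after its `k`-th acceptable school: the preference relation
listing, in the same order, only the `min k _` most-preferred acceptable schools of `p`,
all other schools being unacceptable (kept below `none` in their original order). -/
def truncate (p : List (Option S)) (k : ℕ) : List (Option S) :=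
  ((acceptables p).take k).map some ++
    none :: p.filter (fun x => decide (x ≠ none ∧ x ∉ ((acceptables p).take k).map some))

/-- `μ` is a matching: it respects the capacities `q`. -/
def IsMatching (q : S → ℕ) (μ : I → Option S) : Prop :=
  ∀ s : S, (Finset.univ.filter (fun i => μ i = some s)).card ≤ q s

/-- The pair `(i, s)` blocks `μ` under the problem `(P, prio, q)`. -/
def Blocks (P : I → List (Option S)) (prio : S → List I) (q : S → ℕ)
    (μ : I → Option S) (i : I) (s : S) : Prop :=
  prefLt (P i) (some s) (μ i) ∧
    ((Finset.univ.filter (fun j => μ j = some s)).card < q s ∨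
      ∃ j : I, μ j = some s ∧ prioLt (prio s) i j)

/-- `i` is a blocking student for `μ` under `(P, prio, q)`. -/
def BlockingStudent (P : I → List (Option S)) (prio : S → List I) (q : S → ℕ)
    (μ : I → Option S) (i : I) : Prop :=
  ∃ s : S, Blocks P prio q μ i s

/-- `μ` is individually rational under `P`. -/
def IndividuallyRational (P : I → List (Option S)) (μ : I → Option S) : Prop :=
  ∀ i : I, ¬ prefLt (P i) none (μ i)

/-- `μ` is stable at `(P, prio, q)`. -/
def IsStable (P : I → List (Option S)) (prio : S → List I) (q : S → ℕ)
    (μ : I → Option S) : Prop :=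
  IndividuallyRational P μ ∧ ∀ i : I, ¬ BlockingStudent P prio q μ i

/-- The number of blocking students for `μ` under `(P, prio, q)`. -/
noncomputable def numBlocking (P : I → List (Option S)) (prio : S → List I) (q : S → ℕ)
    (μ : I → Option S) : ℕ :=
  {i : I | BlockingStudent P prio q μ i}.ncard

/-! ### The Gale–Shapley student-proposing deferred acceptance mechanism

The state `σ : I → ℕ` records, for each student, how many of her acceptable schools
have already rejected her; she currently applies to the `σ i`-th school on her list
(if any).  At each round every school tentatively keeps the `q s` highest-priority
students among its current applicants and rejects the rest, who move on. -/

/-- The school student `i` currently applies to. -/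
def daTarget (P : I → List (Option S)) (σ : I → ℕ) (i : I) : Option S :=
  (acceptables (P i))[σ i]?

/-- The students tentatively held by school `s`: the `q s` highest-priority current
applicants. -/
def daHeld (P : I → List (Option S)) (prio : S → List I) (q : S → ℕ)
    (σ : I → ℕ) (s : S) : List I :=
  ((prio s).filter (fun i => decide (daTarget P σ i = some s))).take (q s)

/-- One round of deferred acceptance: every rejected student moves to her next choice. -/
def daStep (P : I → List (Option S)) (prio : S → List I) (q : S → ℕ)
    (σ : I → ℕ) : I → ℕ := fun i =>
  match daTarget P σ i with
  | none => σ i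
  | some s => if i ∈ daHeld P prio q σ s then σ i else σ i + 1

/-- The Gale–Shapley (student-proposing deferred acceptance) mechanism.  Iterating the
round map `|I| * |S| + 1` times is guaranteed to reach the terminal state. -/
def GS (P : I → List (Option S)) (prio : S → List I) (q : S → ℕ) : I → Option S :=
  fun i =>
    let σ := (daStep P prio q)^[Fintype.card I * Fintype.card S + 1] (fun _ => 0)
    match daTarget P σ i with
    | none => none
    | some s => if i ∈ daHeld P prio q σ s then some s else none

/-- The constrained Gale–Shapley mechanism `GS^k`. -/
def GSk (k : ℕ) (P : I → List (Option S)) (prio : S → List I) (q : S → ℕ) : I → Option S :=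
  GS (fun i => truncate (P i) k) prio q

/-! ### The Boston (immediate acceptance) mechanism -/

/-- Round `t` of the Boston mechanism: each not-yet-accepted student applies to her
`t`-th ranked acceptable school (0-indexed), and each school permanently accepts, up to
its remaining capacity, its highest-priority new applicants. -/
def bostonRound (P : I → List (Option S)) (prio : S → List I) (q : S → ℕ)
    (μ : I → Option S) (t : ℕ) : I → Option S := fun i =>
  match μ i with
  | some s => some s
  | none =>
    match (acceptables (P i))[t]? with
    | none => none
    | some s =>
      if i ∈ ((prio s).filter
            (fun j => decide (μ j = none ∧ (acceptables (P j))[t]? = some s))).take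
          (q s - (Finset.univ.filter (fun j => μ j = some s)).card)
      then some s else none

/-- The Boston (immediate acceptance) mechanism. -/
def Boston (P : I → List (Option S)) (prio : S → List I) (q : S → ℕ) : I → Option S :=
  (List.range (Fintype.card S)).foldl (bostonRound P prio q) (fun _ => none)

/-- The constrained Boston mechanism `β^k`. -/
def Bostonk (k : ℕ) (P : I → List (Option S)) (prio : S → List I) (q : S → ℕ) :
    I → Option S :=
  Boston (fun i => truncate (P i) k) prio q

/-! ### The first-preference-first mechanism -/

/-- The adjusted priority profile: each first-preference-first school (member of `fpf`)
ranks students first by the rank they assign to it under `P` (counting the ranking of the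
outside option as well), ties broken by the original priority; equal-preference schools
keep their original priority. -/
def fpfPrio (fpf : Finset S) (P : I → List (Option S)) (prio : S → List I) : S → List I :=
  fun s =>
    if s ∈ fpf then
      (List.range (Fintype.card S + 1)).flatMap
        (fun r => (prio s).filter (fun i => decide ((P i).idxOf (some s) = r)))
    else prio s

/-- The first-preference-first mechanism with set `fpf` of first-preference-first
schools: Gale–Shapley run on the adjusted priorities. -/
def FPF (fpf : Finset S) (P : I → List (Option S)) (prio : S → List I) (q : S → ℕ) :
    I → Option S :=
  GS P (fpfPrio fpf P prio) q

/-- The constrained first-preference-first mechanism `FPF^k`. -/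
def FPFk (fpf : Finset S) (k : ℕ) (P : I → List (Option S)) (prio : S → List I)
    (q : S → ℕ) : I → Option S :=
  FPF fpf (fun i => truncate (P i) k) prio q

/-! ### Manipulation and equilibrium notions -/

/-- Student `i` is a manipulating student of the mechanism `φ` (with priorities and
capacities fixed) at the true profile `P`. -/
def ManipulatingStudent (φ : (I → List (Option S)) → I → Option S)
    (P : I → List (Option S)) (i : I) : Prop :=
  ∃ Q : List (Option S), ValidPref Q ∧
    prefLt (P i) (φ (Function.update P i Q) i) (φ P i)

/-- The mechanism `φ` is not manipulable at `P`. -/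
def NotManipulable (φ : (I → List (Option S)) → I → Option S)
    (P : I → List (Option S)) : Prop :=
  ∀ i : I, ¬ ManipulatingStudent φ P i

/-- `P'` is a Nash equilibrium of the game `(φ, P)` in which the sophisticated students
are the members of `M` (who may misreport, and best respond) and all other (sincere)
students report truthfully. -/
def NashEq (φ : (I → List (Option S)) → I → Option S) (P : I → List (Option S))
    (M : Finset I) (P' : I → List (Option S)) : Prop :=
  (∀ i, ValidPref (P' i)) ∧ (∀ i ∉ M, P' i = P i) ∧
    ∀ i ∈ M, ∀ Q : List (Option S), ValidPref Q →
      ¬ prefLt (P i) (φ (Function.update P' i Q) i) (φ P' i)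

/-! ### Semi-sophisticated students -/

/-- Student `i` is guaranteed her first choice `s`: `s` is her most-preferred acceptable
school and `i` is among the `q s` highest-priority students at `s`. -/
def GuaranteedFirstChoice (P : I → List (Option S)) (prio : S → List I) (q : S → ℕ)
    (i : I) (s : S) : Prop :=
  (acceptables (P i)).head? = some s ∧ (prio s).idxOf i < q s

instance (P : I → List (Option S)) (prio : S → List I) (q : S → ℕ) (i : I) (s : S) :
    Decidable (GuaranteedFirstChoice P prio q i s) :=
  inferInstanceAs (Decidable (_ ∧ _))

/-- School `s` is competitive: at least `q s` students are guaranteed their first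
choice `s`. -/
def Competitive (P : I → List (Option S)) (prio : S → List I) (q : S → ℕ) (s : S) : Prop :=
  q s ≤ (Finset.univ.filter (fun i => GuaranteedFirstChoice P prio q i s)).card

instance (P : I → List (Option S)) (prio : S → List I) (q : S → ℕ) (s : S) :
    Decidable (Competitive P prio q s) :=
  inferInstanceAs (Decidable (_ ≤ _))

/-- `P'` is a Nash equilibrium of the game `(GS^ℓ, P)` with semi-sophisticated students:
every student guaranteed her first choice reports truthfully; every other student reports
truthfully if she has at most `ℓ` acceptable schools or all her acceptable schools are
competitive, and otherwise lists as acceptable, in the order given by her true preference,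
only her acceptable schools that are not competitive. -/
def SemiSophProfile (ℓ : ℕ) (P : I → List (Option S)) (prio : S → List I) (q : S → ℕ)
    (P' : I → List (Option S)) : Prop :=
  ∀ i : I,
    ((∃ s : S, GuaranteedFirstChoice P prio q i s) → P' i = P i) ∧
    (¬ (∃ s : S, GuaranteedFirstChoice P prio q i s) →
      (((acceptables (P i)).length ≤ ℓ ∨ ∀ s ∈ acceptables (P i), Competitive P prio q s) →
          P' i = P i) ∧
      (¬ ((acceptables (P i)).length ≤ ℓ ∨
            ∀ s ∈ acceptables (P i), Competitive P prio q s) →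
          acceptables (P' i) =
            (acceptables (P i)).filter (fun s => decide (¬ Competitive P prio q s))))

end SchoolChoice

/-!
If `(i, s)` blocks `β^k(P)`, let `i` move `s` to the top of her list, where it survives
truncation since `k ≥ 1`. If she is then among the `q s` highest-priority students ranking `s`
first, the Boston mechanism admits her to `s` in the first round. Otherwise, since `i` is not
among them, these `q s` students are the same under the truthful profile, so there `s` is
filled in the first round by students of higher priority than `i` and admits nobody later;
then `(i, s)` cannot block `β^k(P)`.
-/

namespace List

variable {α : Type*}

theorem take_filter_eq_of_forall_ne {l : List α} {p p' : α → Bool} {a : α} {n : ℕ}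
    (hpp' : ∀ x, x ≠ a → p x = p' x) (ha : p' a) (han : a ∉ (l.filter p').take n) :
    (l.filter p).take n = (l.filter p').take n := by
  induction l generalizing n with
  | nil => simp
  | cons x xs ih =>
    cases n with
    | zero => simp
    | succ n =>
      by_cases hx : x = a
      · subst hx
        simp [ha] at han
      · by_cases hpx : p' x
        · simp only [filter_cons, hpx, hpp' x hx, if_true, take_succ_cons, mem_cons,
            not_or] at han ⊢
          rw [ih han.2]
        · simp only [filter_cons, hpx, hpp' x hx] at han ⊢
          exact ih han

theorem Nodup.idxOf_lt_of_mem_take_of_mem_drop [DecidableEq α] {l L : List α} (hl : l.Nodup)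
    (hL : L <+ l) {n : ℕ} {a b : α} (ha : a ∈ L.take n) (hb : b ∈ L.drop n) :
    l.idxOf a < l.idxOf b := by
  have hsorted : l.Pairwise (fun a b => l.idxOf a < l.idxOf b) := by
    rw [pairwise_iff_getElem]
    intro i j hi hj hij
    rwa [hl.idxOf_getElem i hi, hl.idxOf_getElem j hj]
  rw [← take_append_drop n L] at hL
  exact (pairwise_append.mp (hsorted.sublist hL)).2.2 a ha b hb

end List

namespace SchoolChoice

variable {I S : Type*}

section Preferences

theorem ValidPref.cons_erase [DecidableEq S] {p : List (Option S)} (hp : ValidPref p)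
    (x : Option S) : ValidPref (x :: p.erase x) := by
  refine ⟨List.nodup_cons.mpr ⟨fun h => (hp.1.mem_erase_iff.mp h).1 rfl, hp.1.erase x⟩, ?_⟩
  intro y
  by_cases hy : y = x
  · exact hy ▸ List.mem_cons_self
  · exact List.mem_cons_of_mem _ ((List.mem_erase_of_ne hy).mpr (hp.2 y))

theorem acceptables_cons_some (s : S) (l : List (Option S)) :
    acceptables (some s :: l) = s :: acceptables l := by
  simp [acceptables, List.takeWhile]

theorem acceptables_truncate [DecidableEq S] (p : List (Option S)) (k : ℕ) :
    acceptables (truncate p k) = (acceptables p).take k := by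
  have htake : ∀ (l : List S) (r : List (Option S)),
      (l.map some ++ none :: r).takeWhile Option.isSome = l.map some := by
    intro l r
    induction l with
    | nil => rfl
    | cons a t ih => simp [ih]
  rw [truncate, acceptables, htake, List.filterMap_map]
  simp

end Preferences

section Boston

variable [DecidableEq S]

/-- The students who apply to `s` in round `t` of the Boston mechanism under `R` if still
unassigned, in the priority order of `s`. -/
def applicants (R : I → List (Option S)) (prio : S → List I) (t : ℕ) (s : S) : List I :=
  (prio s).filter (fun j => decide ((acceptables (R j))[t]? = some s))

variable (R : I → List (Option S)) (prio : S → List I) (q : S → ℕ)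

theorem applicants_sublist (t : ℕ) (s : S) : (applicants R prio t s).Sublist (prio s) :=
  List.filter_sublist

theorem nodup_take_applicants {s : S} (hs : (prio s).Nodup) (t n : ℕ) :
    ((applicants R prio t s).take n).Nodup :=
  ((List.take_sublist n _).trans (applicants_sublist R prio t s)).nodup hs

variable [Fintype I] [DecidableEq I]

theorem bostonRound_empty_eq_some_iff (t : ℕ) (j : I) (s : S) :
    bostonRound R prio q (fun _ => none) t j = some s ↔
      j ∈ (applicants R prio t s).take (q s) := by
  have happ : j ∈ (applicants R prio t s).take (q s) → (acceptables (R j))[t]? = some s :=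
    fun h => by simpa [applicants] using (List.mem_filter.mp (List.take_subset _ _ h)).2
  unfold bostonRound
  cases ht : (acceptables (R j))[t]? with
  | none => simpa [ht] using mt happ
  | some s' =>
    by_cases hs : s' = s
    · subst hs
      simp [applicants]
    · simp only [ht, Option.some_inj, hs, imp_false] at happ
      simp [hs, happ]

theorem foldl_bostonRound_of_eq_some (ts : List ℕ) {μ : I → Option S} {j : I} {s : S}
    (h : μ j = some s) : ts.foldl (bostonRound R prio q) μ j = some s := by
  induction ts generalizing μ with
  | nil => exact h
  | cons t ts ih => exact ih (by simp [bostonRound, h])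

theorem bostonRound_eq_some_iff_of_full {μ : I → Option S} {s : S}
    (hfull : q s ≤ (Finset.univ.filter (fun j => μ j = some s)).card) (t : ℕ) (j : I) :
    bostonRound R prio q μ t j = some s ↔ μ j = some s := by
  unfold bostonRound
  cases hμ : μ j with
  | some s' => simp
  | none =>
    cases ht : (acceptables (R j))[t]? with
    | none => simp
    | some s' =>
      by_cases hs : s' = s
      · subst hs
        simp [Nat.sub_eq_zero_of_le hfull]
      · simp [hs]

theorem foldl_bostonRound_eq_some_iff_of_full (ts : List ℕ) {μ : I → Option S} {s : S}
    (hfull : q s ≤ (Finset.univ.filter (fun j => μ j = some s)).card) (j : I) :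
    ts.foldl (bostonRound R prio q) μ j = some s ↔ μ j = some s := by
  induction ts generalizing μ with
  | nil => rfl
  | cons t ts ih =>
    have hsame := bostonRound_eq_some_iff_of_full R prio q hfull t
    rw [List.foldl_cons, ih (by simpa only [hsame] using hfull), hsame]

variable [Fintype S]

theorem boston_eq_foldl [Nonempty S] :
    Boston R prio q = (List.range' 1 (Fintype.card S - 1)).foldl (bostonRound R prio q)
      (bostonRound R prio q (fun _ => none) 0) := by
  obtain ⟨n, hn⟩ := Nat.exists_eq_add_of_lt (Fintype.card_pos (α := S))
  rw [Boston, hn, List.range_eq_range', List.range'_succ]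
  rfl

theorem boston_eq_some_of_mem_take_applicants {j : I} {s : S}
    (hj : j ∈ (applicants R prio 0 s).take (q s)) : Boston R prio q j = some s := by
  have : Nonempty S := ⟨s⟩
  rw [boston_eq_foldl]
  exact foldl_bostonRound_of_eq_some R prio q _
    ((bostonRound_empty_eq_some_iff R prio q 0 j s).mpr hj)

theorem filter_boston_eq_some_of_le_length {s : S}
    (hlen : q s ≤ (applicants R prio 0 s).length) (hs : (prio s).Nodup) :
    Finset.univ.filter (fun j => Boston R prio q j = some s) =
      ((applicants R prio 0 s).take (q s)).toFinset := by
  have : Nonempty S := ⟨s⟩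
  have hround : Finset.univ.filter (fun j => bostonRound R prio q (fun _ => none) 0 j = some s) =
      ((applicants R prio 0 s).take (q s)).toFinset := by
    ext j
    simp [bostonRound_empty_eq_some_iff]
  have hfull : q s ≤ (Finset.univ.filter
      (fun j => bostonRound R prio q (fun _ => none) 0 j = some s)).card := by
    rw [hround, List.toFinset_card_of_nodup (nodup_take_applicants R prio hs 0 (q s)), List.length_take, min_eq_left hlen]
  rw [← hround, boston_eq_foldl]
  ext j
  simp only [Finset.mem_filter, Finset.mem_univ, true_and]
  exact foldl_bostonRound_eq_some_iff_of_full R prio q _ hfull j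

theorem boston_eq_some_of_head_of_blocks {R R' : I → List (Option S)} {prio : S → List I}
    {q : S → ℕ} {i : I} {s : S} (hprio : ValidPrio (prio s)) (hR : ∀ j, j ≠ i → R' j = R j)
    (hhead : (acceptables (R' i))[0]? = some s)
    (hblock : (Finset.univ.filter (fun j => Boston R prio q j = some s)).card < q s ∨
      ∃ j, Boston R prio q j = some s ∧ prioLt (prio s) i j) :
    Boston R' prio q i = some s := by
  by_cases hi : i ∈ (applicants R' prio 0 s).take (q s)
  · exact boston_eq_some_of_mem_take_applicants R' prio q hi
  exfalso
  have hiR' : i ∈ applicants R' prio 0 s :=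
    List.mem_filter.mpr ⟨hprio.2 i, by simpa using hhead⟩
  have hsame : (applicants R prio 0 s).take (q s) = (applicants R' prio 0 s).take (q s) :=
    List.take_filter_eq_of_forall_ne (fun j hj => by rw [hR j hj]) (by simpa using hhead) hi
  have hlen' : q s < (applicants R' prio 0 s).length := by
    by_contra h
    exact hi (by rwa [List.take_of_length_le (not_lt.mp h)])
  have hlen : q s ≤ (applicants R prio 0 s).length := by
    simpa [hlen'.le] using congrArg List.length hsame
  have hfilter := filter_boston_eq_some_of_le_length R prio q hlen hprio.1
  rw [hsame] at hfilter
  rcases hblock with hlt | ⟨j, hj, hij⟩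
  · rw [hfilter, List.toFinset_card_of_nodup (nodup_take_applicants R' prio hprio.1 0 (q s)),
      List.length_take, min_eq_left hlen'.le] at hlt
    exact lt_irrefl _ hlt
  · have hj' : j ∈ (applicants R' prio 0 s).take (q s) := by
      have hmem : j ∈ Finset.univ.filter (fun j => Boston R prio q j = some s) := by simpa
      simpa [hfilter] using hmem
    have hi' : i ∈ (applicants R' prio 0 s).drop (q s) :=
      (List.mem_append.mp ((List.take_append_drop _ _).symm ▸ hiR')).resolve_left hi
    exact lt_asymm hij
      (hprio.1.idxOf_lt_of_mem_take_of_mem_drop (applicants_sublist R' prio 0 s) hj' hi')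

end Boston

theorem blocking_student_manipulates_bostonk_general
    {I S : Type*} [Fintype I] [DecidableEq I] [Fintype S] [DecidableEq S]
    (P : I → List (Option S)) (prio : S → List I) (q : S → ℕ)
    (hP : ∀ i, ValidPref (P i)) (hprio : ∀ s, ValidPrio (prio s))
    (k : ℕ) (hk : 1 < k) (i : I)
    (hb : BlockingStudent P prio q (Bostonk k P prio q) i) :
    ManipulatingStudent (fun R => Bostonk k R prio q) P i := by
  obtain ⟨s, hpref, hblock⟩ := hb
  set Q := some s :: (P i).erase (some s)
  have hhead : (acceptables (truncate (Function.update P i Q i) k))[0]? = some s := by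
    simp [Q, acceptables_truncate, acceptables_cons_some, Nat.zero_lt_of_lt hk]
  have hs : Bostonk k (Function.update P i Q) prio q i = some s :=
    boston_eq_some_of_head_of_blocks (hprio s)
      (fun j hj => by rw [Function.update_of_ne hj]) hhead hblock
  exact ⟨Q, (hP i).cons_erase _, by simpa only [hs] using hpref⟩

/-- Theorem 5(i): for `k > 1`, every blocking student for
`β^k(P,≻,q)` under `(P,≻,q)` is a manipulating student of `β^k` at `(P,≻,q)`. -/
theorem blocking_student_manipulates_bostonk
    {I S : Type*} [Fintype I] [DecidableEq I] [Fintype S] [DecidableEq S]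
    (hIS : Fintype.card S < Fintype.card I)
    (P : I → List (Option S)) (prio : S → List I) (q : S → ℕ)
    (hP : ∀ i, ValidPref (P i)) (hprio : ∀ s, ValidPrio (prio s))
    (k : ℕ) (hk : 1 < k) (i : I)
    (hb : BlockingStudent P prio q (Bostonk k P prio q) i) :
    ManipulatingStudent (fun R => Bostonk k R prio q) P i :=
  blocking_student_manipulates_bostonk_general P prio q hP hprio k hk i hb

end SchoolChoice
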